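/- arXiv:2105.10381 — 3 statements merged into one kernel-verified Lean document; each statement's English description precedes it below -/
import Mathlib

section
/- Let X, Y, P be discrete random variables (taking finitely many values with positive probability). If for all values x, y, p one has P(Y=y | X=x, P=p) ≤ P(Y=y | P=p), then in fact P(Y=y | X=x, P=p) = P(Y=y | P=p) for all x, y, p; i.e., X and Y are conditionally independent given P. -/
/-! If no ratio `n i / d i` exceeds the aggregate ratio `q = ∑ n / ∑ d`, then `n i ≤ q * d i`
for every `i`; summing, both sides have the same total, so every one of these inequalities is
an equality. For the theorem take `i = x`, `n x = P(X = x, Y = y, P = p)` and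
`d x = P(X = x, P = p)`, so that `q = P(Y = y | P = p)`. -/

open Finset

theorem Finset.div_eq_sum_div_sum_of_forall_div_le {ι : Type*} (s : Finset ι) (n d : ι → ℝ)
    (hd : ∀ i ∈ s, 0 ≤ d i) (hn : ∀ i ∈ s, d i = 0 → n i = 0) (hD : 0 < ∑ i ∈ s, d i)
    (hle : ∀ i ∈ s, 0 < d i → n i / d i ≤ (∑ j ∈ s, n j) / ∑ j ∈ s, d j) :
    ∀ i ∈ s, 0 < d i → n i / d i = (∑ j ∈ s, n j) / ∑ j ∈ s, d j := by
  set q := (∑ j ∈ s, n j) / ∑ j ∈ s, d j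
  have hbound : ∀ i ∈ s, n i ≤ q * d i := by
    intro i hi
    rcases (hd i hi).eq_or_lt with hdi | hdi
    · rw [hn i hi hdi.symm, ← hdi, mul_zero]
    · exact (div_le_iff₀ hdi).1 (hle i hi hdi)
  have htotal : ∑ i ∈ s, n i = ∑ i ∈ s, q * d i := by
    rw [← mul_sum, div_mul_cancel₀ _ hD.ne']
  intro i hi hdi
  rw [(sum_eq_sum_iff_of_le hbound).1 htotal i hi, mul_div_cancel_right₀ _ hdi.ne']

theorem stmt_0_general {X Y P : Type*} [Fintype X] [Fintype Y] [Fintype P]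
    (μ : X × Y × P → ℝ)
    (hpos : ∀ a, 0 ≤ μ a)
    (hle : ∀ (x : X) (y : Y) (p : P),
      0 < ∑ y', μ (x, y', p) →
      0 < ∑ x', ∑ y', μ (x', y', p) →
      μ (x, y, p) / ∑ y', μ (x, y', p) ≤
        (∑ x', μ (x', y, p)) / ∑ x', ∑ y', μ (x', y', p)) :
    ∀ (x : X) (y : Y) (p : P),
      0 < ∑ y', μ (x, y', p) →
      0 < ∑ x', ∑ y', μ (x', y', p) →
      μ (x, y, p) / ∑ y', μ (x, y', p) =
        (∑ x', μ (x', y, p)) / ∑ x', ∑ y', μ (x', y', p) := by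
  intro x y p hx hM
  refine univ.div_eq_sum_div_sum_of_forall_div_le (fun x' => μ (x', y, p))
    (fun x' => ∑ y', μ (x', y', p)) (fun x' _ => sum_nonneg fun y' _ => hpos _) ?_ hM
    (fun x' _ hx' => hle x' y p hx' hM) x (mem_univ x) hx
  intro x' _ hzero
  exact (sum_eq_zero_iff_of_nonneg fun y' _ => hpos _).1 hzero y (mem_univ y)

/-- If conditioning on `X` never raises the conditional probability of any outcome of `Y`
given the past `P`, then all such conditional probabilities are unchanged, i.e. `X ⊥ Y | P`. -/
theorem stmt_0 {X Y P : Type*} [Fintype X] [Fintype Y] [Fintype P]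
    (μ : X × Y × P → ℝ)
    (hpos : ∀ a, 0 ≤ μ a) (hsum : ∑ a, μ a = 1)
    (hle : ∀ (x : X) (y : Y) (p : P),
      0 < ∑ y', μ (x, y', p) →
      0 < ∑ x', ∑ y', μ (x', y', p) →
      μ (x, y, p) / ∑ y', μ (x, y', p) ≤
        (∑ x', μ (x', y, p)) / ∑ x', ∑ y', μ (x', y', p)) :
    ∀ (x : X) (y : Y) (p : P),
      0 < ∑ y', μ (x, y', p) →
      0 < ∑ x', ∑ y', μ (x', y', p) →
      μ (x, y, p) / ∑ y', μ (x, y', p) =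
        (∑ x', μ (x', y, p)) / ∑ x', ∑ y', μ (x', y', p) :=
  stmt_0_general μ hpos hle
end

section
/- Let X, Y, P be discrete random variables. If the conditional mutual information I(X; Y | P) > 0, then there exist values x, y, p with P(X=x, P=p) > 0 such that P(Y=y | X=x, P=p) > P(Y=y | P=p). -/
open Finset

/-- If the conditional mutual information `I(X;Y|P)` is positive, then there are values
`x, y, p` with `P(X=x, P=p) > 0` such that `P(Y=y | X=x, P=p) > P(Y=y | P=p)`:
an entropic prima facie cause is a prima facie cause. -/
theorem stmt_1 {X Y P : Type*} [Fintype X] [Fintype Y] [Fintype P]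
    (μ : X × Y × P → ℝ)
    (hpos : ∀ a, 0 ≤ μ a) (hsum : ∑ a, μ a = 1)
    (hI : 0 < ∑ x, ∑ y, ∑ p, μ (x, y, p) *
      Real.log (μ (x, y, p) * (∑ x', ∑ y', μ (x', y', p)) /
        ((∑ y', μ (x, y', p)) * (∑ x', μ (x', y, p))))) :
    ∃ (x : X) (y : Y) (p : P),
      0 < ∑ y', μ (x, y', p) ∧
      (∑ x', μ (x', y, p)) / (∑ x', ∑ y', μ (x', y', p)) <
        μ (x, y, p) / ∑ y', μ (x, y', p) := by
  by_contra hcon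
  push_neg at hcon
  refine absurd hI (not_lt.mpr ?_)
  apply Finset.sum_nonpos; intro x _
  apply Finset.sum_nonpos; intro y _
  apply Finset.sum_nonpos; intro p _
  set A := ∑ y', μ (x, y', p) with hA
  set B := ∑ x', μ (x', y, p) with hB
  set S := ∑ x', ∑ y', μ (x', y', p) with hS
  rcases eq_or_lt_of_le (hpos (x, y, p)) with h0 | h0
  · simp [← h0]
  · have hApos : 0 < A := lt_of_lt_of_le h0
      (Finset.single_le_sum (fun i _ => hpos (x, i, p)) (Finset.mem_univ y))
    have hBpos : 0 < B := lt_of_lt_of_le h0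
      (Finset.single_le_sum (fun i _ => hpos (i, y, p)) (Finset.mem_univ x))
    have hSpos : 0 < S := lt_of_lt_of_le hApos
      (Finset.single_le_sum (fun i _ => Finset.sum_nonneg fun j _ => hpos (i, j, p))
        (Finset.mem_univ x))
    have hle := hcon x y p hApos
    rw [div_le_div_iff₀ hApos hSpos] at hle
    have hmul : μ (x, y, p) * S ≤ A * B := by nlinarith
    have harg : μ (x, y, p) * S / (A * B) ≤ 1 :=
      (div_le_one (by positivity)).mpr hmul
    have hlog : Real.log (μ (x, y, p) * S / (A * B)) ≤ 0 :=
      Real.log_nonpos (by positivity) harg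
    exact mul_nonpos_of_nonneg_of_nonpos h0.le hlog
end

section
/- In a directed acyclic graph G over vertex set V, suppose every edge p–q in an undirected graph S over V satisfies: p and q are adjacent in S if and only if for every subset R ⊆ V \ {p,q}, p and q are d-connected given R in G. If the joint distribution is Markov and faithful to G, and S is constructed by removing the edge p–q from the complete graph exactly when some subset R ⊆ V \ {p,q} renders p and q conditionally independent, then S equals the skeleton of G (the undirected graph of adjacencies of G). -/
/-- The predicate on a walk (list of vertices) that every interior vertex is "active"
given the conditioning set `S`: colliders must have a descendant in `S`, and
non-colliders must lie outside `S`. -/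
def ActiveList {V : Type*} (E : V → V → Prop) (S : Set V) : List V → Prop
  | a :: b :: c :: l =>
      ((E a b ∧ E c b) → ∃ d, Relation.ReflTransGen E b d ∧ d ∈ S) ∧
      (¬(E a b ∧ E c b) → b ∉ S) ∧
      ActiveList E S (b :: c :: l)
  | _ => True

/-- `p` and `q` are d-connected given `S` in the directed graph `E`. -/
def DConnected {V : Type*} (E : V → V → Prop) (S : Set V) (p q : V) : Prop :=
  ∃ l : List V, l.Nodup ∧ l.Chain' (fun a b => E a b ∨ E b a) ∧
    l.head? = some p ∧ l.getLast? = some q ∧ ActiveList E S l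

/-
Adjacent vertices are d-connected by their one-edge walk, whatever the conditioning set.
If `p`, `q` are not adjacent, acyclicity lets us assume `q` is not a descendant of `p`, and then
the parents of `p` block every walk: a walk leaving `p` through a parent has that parent as a
non-collider inside the conditioning set, and a walk leaving `p` along an out-edge must stay
directed (a first collider would have a descendant among the parents of `p`, closing a cycle),
so it could only end at a descendant of `p`.
-/

section

variable {V : Type*} (E : V → V → Prop) (S : Set V)

def ActiveTriple (a b c : V) : Prop :=
  ((E a b ∧ E c b) → ∃ d, Relation.ReflTransGen E b d ∧ d ∈ S) ∧
  (¬(E a b ∧ E c b) → b ∉ S)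

variable {E S}

theorem ActiveTriple.symm {a b c : V} (h : ActiveTriple E S a b c) : ActiveTriple E S c b a :=
  ⟨fun hab => h.1 hab.symm, fun hab => h.2 fun h' => hab h'.symm⟩

theorem activeList_iff_forall_infix :
    ∀ l : List V, ActiveList E S l ↔ ∀ a b c, [a, b, c] <:+: l → ActiveTriple E S a b c
  | [] | [_] | [_, _] => by
    simp only [ActiveList, true_iff]
    exact fun _ _ _ h => absurd h.length_le (by simp)
  | a :: b :: c :: l => by
    have hcons : ActiveList E S (a :: b :: c :: l) ↔
        ActiveTriple E S a b c ∧ ActiveList E S (b :: c :: l) := by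
      simp only [ActiveList, ActiveTriple, and_assoc]
    rw [hcons, activeList_iff_forall_infix (b :: c :: l)]
    simp only [List.infix_cons_iff (l₂ := b :: c :: l), List.cons_prefix_cons, List.nil_prefix,
      and_true, or_imp, forall_and]
    constructor
    · rintro ⟨htriple, hrest⟩
      exact ⟨by rintro _ _ _ ⟨rfl, rfl, rfl⟩; exact htriple, hrest⟩
    · rintro ⟨htriple, hrest⟩
      exact ⟨htriple a b c ⟨rfl, rfl, rfl⟩, hrest⟩

theorem ActiveList.reverse {l : List V} (h : ActiveList E S l) : ActiveList E S l.reverse := by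
  rw [activeList_iff_forall_infix] at h ⊢
  intro a b c habc
  exact (h c b a (List.reverse_infix.mp (by simpa using habc))).symm

theorem DConnected.symm {p q : V} (h : DConnected E S p q) : DConnected E S q p := by
  obtain ⟨l, hnodup, hchain, hhead, hlast, hactive⟩ := h
  refine ⟨l.reverse, List.nodup_reverse.mpr hnodup, ?_, ?_, ?_, hactive.reverse⟩
  · exact List.isChain_reverse.mpr (hchain.imp fun _ _ hab => hab.symm)
  · rwa [List.head?_reverse]
  · rwa [List.getLast?_reverse]

theorem DConnected.of_adj {p q : V} (hne : p ≠ q) (hadj : E p q ∨ E q p) : DConnected E S p q :=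
  ⟨[p, q], by simp [hne], List.isChain_pair.mpr hadj, rfl, rfl, trivial⟩

theorem transGen_of_activeList_of_forall_not_descendant {p q : V}
    (hS : ∀ d ∈ S, ¬ Relation.ReflTransGen E p d) :
    ∀ (t : List V) (a b : V), Relation.ReflTransGen E p a → E a b →
      (a :: b :: t).IsChain (fun x y => E x y ∨ E y x) → ActiveList E S (a :: b :: t) →
      (a :: b :: t).getLast? = some q → Relation.TransGen E p q
  | [], a, b, hpa, hab, _, _, hlast => by
    obtain rfl : b = q := by simpa using hlast
    exact Relation.TransGen.tail' hpa hab
  | c :: t, a, b, hpa, hab, hchain, ⟨hcollider, _, hactive⟩, hlast => by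
    have hchain' := hchain.tail
    rcases List.isChain_cons_cons.mp hchain' |>.1 with hbc | hcb
    · exact transGen_of_activeList_of_forall_not_descendant hS t b c
        (hpa.tail hab) hbc hchain' hactive (by simpa using hlast)
    · obtain ⟨d, hbd, hdS⟩ := hcollider ⟨hab, hcb⟩
      exact absurd ((hpa.tail hab).trans hbd) (hS d hdS)

theorem not_dConnected_parents {p q : V} (hacyclic : ∀ v, ¬ Relation.TransGen E v v)
    (hne : p ≠ q) (hqp : ¬ E q p) (hdesc : ¬ Relation.TransGen E p q) :
    ¬ DConnected E {v | E v p} p q := by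
  rintro ⟨l, -, hchain, hhead, hlast, hactive⟩
  obtain ⟨b, t, rfl⟩ : ∃ b t, l = p :: b :: t := by
    match l, hhead, hlast with
    | [_], rfl, hlast => exact absurd (by simpa using hlast) hne
    | _ :: b :: t, rfl, _ => exact ⟨b, t, rfl⟩
  have hparents : ∀ d ∈ {v | E v p}, ¬ Relation.ReflTransGen E p d :=
    fun d hdp hpd => hacyclic p (Relation.TransGen.tail' hpd hdp)
  rcases List.isChain_cons_cons.mp hchain |>.1 with hpb | hbp
  · exact hdesc (transGen_of_activeList_of_forall_not_descendant hparents t p b .refl hpb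
      hchain hactive hlast)
  · match t, hactive, hlast with
    | [], _, hlast =>
      obtain rfl : b = q := by simpa using hlast
      exact hqp hbp
    | c :: t, ⟨_, hnoncollider, _⟩, _ =>
      exact hnoncollider (fun ⟨hpb, _⟩ => hacyclic p (.head hpb (.single hbp))) hbp

theorem adj_iff_forall_dConnected {p q : V} (hacyclic : ∀ v, ¬ Relation.TransGen E v v)
    (hne : p ≠ q) : (E p q ∨ E q p) ↔ ∀ R : Set V, p ∉ R → q ∉ R → DConnected E R p q := by
  refine ⟨fun hadj R _ _ => .of_adj hne hadj, fun hconn => ?_⟩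
  by_contra! ⟨hpq, hqp⟩
  have hnotParent {v : V} : v ∉ {u | E u v} := fun hvv => hacyclic v (.single hvv)
  by_cases hdesc : Relation.TransGen E p q
  · have hqp' : ¬ Relation.TransGen E q p := fun hqp' => hacyclic p (hdesc.trans hqp')
    exact not_dConnected_parents hacyclic hne.symm hpq hqp' (hconn _ hpq hnotParent).symm
  · exact not_dConnected_parents hacyclic hne hqp hdesc (hconn _ hnotParent hqp)

end

theorem stmt_15_general {V : Type*}
    (E : V → V → Prop) (hacyclic : ∀ v, ¬ Relation.TransGen E v v)
    (SAdj : V → V → Prop)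
    (hchar : ∀ p q : V, p ≠ q →
      (SAdj p q ↔ ∀ R : Set V, p ∉ R → q ∉ R → DConnected E R p q)) :
    ∀ p q : V, p ≠ q → (SAdj p q ↔ (E p q ∨ E q p)) :=
  fun p q hne => (hchar p q hne).trans (adj_iff_forall_dConnected hacyclic hne).symm

/-- Correctness of the PC-style skeleton construction: if the distribution
(abstracted by its conditional-independence relation `CI`) is Markov and faithful
to a DAG `G = (V, E)`, the undirected graph `SAdj` is obtained from the complete
graph by removing `p – q` exactly when some `R ⊆ V \ {p,q}` renders `p` and `q`
conditionally independent, and adjacency in `SAdj` is characterized by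
d-connection given every such `R`, then `SAdj` is the skeleton of `G`. -/
theorem stmt_15 {V : Type*} [Fintype V] [DecidableEq V]
    (E : V → V → Prop) (hacyclic : ∀ v, ¬ Relation.TransGen E v v)
    (CI : V → V → Set V → Prop)
    (hMarkov : ∀ (p q : V) (S : Set V), p ≠ q → p ∉ S → q ∉ S →
      ¬ DConnected E S p q → CI p q S)
    (hFaithful : ∀ (p q : V) (S : Set V), p ≠ q → p ∉ S → q ∉ S →
      CI p q S → ¬ DConnected E S p q)
    (SAdj : V → V → Prop)
    (hSdef : ∀ p q : V, p ≠ q →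
      (SAdj p q ↔ ¬ ∃ R : Set V, p ∉ R ∧ q ∉ R ∧ CI p q R))
    (hchar : ∀ p q : V, p ≠ q →
      (SAdj p q ↔ ∀ R : Set V, p ∉ R → q ∉ R → DConnected E R p q)) :
    ∀ p q : V, p ≠ q → (SAdj p q ↔ (E p q ∨ E q p)) :=
  stmt_15_general E hacyclic SAdj hchar
end
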